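/- Let (λ, f) be a flagged strict partition of length r, and if r ≥ 2 assume λ_{r−1} > f_{r−1} or λ_r > f_r. Then Q_{λ,f}(x;z|b) = Σ_μ Q_μ(x|b) · (s̃_{λ̄/μ̄, f}(z|b))^⋆, where the sum is over strict partitions μ ⊆ λ (padded by zeros to r parts) such that μ̄ = (μ_1, μ_2 + 1, …, μ_r + r − 1) is a partition, λ̄_i = λ_i + i − 1, and ⋆ is the substitution b_{−i} ↦ −b_{i+1} for all i ≥ 0. The identity holds for every number n of x-variables. -/

import Mathlib

open Finset

noncomputable section

variable {R : Type*} [CommRing R]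

/-- The formal power series `1/(1 - x·u)`. -/
def geomSeries (x : R) : PowerSeries R := PowerSeries.mk fun m => x ^ m

/-- `e_u^{[k]}(c)`: the power series `∏_{i=1}^k (1 + c_i u)` for `k ≥ 0`, and
`∏_{i=1}^{-k} (1 - c_i u)⁻¹` for `k < 0`.  The sequence `c` is read at indices `1, 2, …`. -/
def eSer (k : ℤ) (c : ℕ → R) : PowerSeries R :=
  if 0 ≤ k then ∏ i ∈ Finset.range k.toNat, (1 + PowerSeries.C (c (i + 1)) * PowerSeries.X)
  else ∏ i ∈ Finset.range (-k).toNat, geomSeries (c (i + 1))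

/-- `q_u(x) = ∏_{i=1}^n (1 + x_i u)/(1 - x_i u)`, with `n` x-variables. -/
def qSer (n : ℕ) (x : ℕ → R) : PowerSeries R :=
  ∏ i ∈ Finset.range n,
    ((1 + PowerSeries.C (x (i + 1)) * PowerSeries.X) * geomSeries (x (i + 1)))

/-- The coefficient of `u^m` (`m : ℤ`) of a power series; zero when `m < 0`. -/
def coeffZ (m : ℤ) (φ : PowerSeries R) : R :=
  if 0 ≤ m then PowerSeries.coeff m.toNat φ else 0

/-- `q_m^{[ℓ]}(x|c)`: the coefficient of `u^m` in `q_u(x)·e_u^{[ℓ]}(c)`. -/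
def qC (m ℓ : ℤ) (n : ℕ) (x c : ℕ → R) : R := coeffZ m (qSer n x * eSer ℓ c)

/-- `q_m^{[k|ℓ]}(x;z|c)`: the coefficient of `u^m` in `q_u(x)·e_u^{[k]}(z)·e_u^{[ℓ]}(c)`. -/
def qC2 (m k ℓ : ℤ) (n : ℕ) (x z c : ℕ → R) : R :=
  coeffZ m (qSer n x * eSer k z * eSer ℓ c)

/-- `e_m^{[k]}(c)`. -/
def eC (m k : ℤ) (c : ℕ → R) : R := coeffZ m (eSer k c)

/-- `e_m^{[k|ℓ]}(z|c)`: the coefficient of `u^m` in `e_u^{[k]}(z)·e_u^{[ℓ]}(c)`. -/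
def eC2 (m k ℓ : ℤ) (z c : ℕ → R) : R := coeffZ m (eSer k z * eSer ℓ c)

/-- Extension of `b` to all integer indices using the convention `b_{-i} = -b_{i+1}` for
`i ≥ 0`; positive indices are untouched.  This also implements the `⋆` substitution. -/
def bext (b : ℤ → R) : ℤ → R := fun j => if 0 < j then b j else -b (1 - j)

/-- `ε(0) = 1` and `ε(m) = 2·(-1)^m` for `m ≥ 1`. -/
def pfEps (m : ℕ) : ℤ := if m = 0 then 1 else 2 * (-1) ^ m

/-- The subscript `α_i + Σ_{j>i} m_{ij} − Σ_{j<i} m_{ji}` in the Schur–Pfaffian. -/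
def pfIdx {r : ℕ} (α : Fin r → ℤ) (m : Fin r → Fin r → ℕ) (i : Fin r) : ℤ :=
  α i + ∑ j, (if i < j then (m i j : ℤ) else 0) - ∑ j, (if j < i then (m j i : ℤ) else 0)

/-- The Schur–Pfaffian `Pf[c^{(1)}_{α_1} ⋯ c^{(r)}_{α_r}]`, as the (finitely supported) sum
over tuples of nonnegative integers `(m_{ij})_{1 ≤ i < j ≤ r}`. -/
def schurPf {r : ℕ} (c : Fin r → ℤ → R) (α : Fin r → ℤ) : R :=
  ∑ᶠ m ∈ {m : Fin r → Fin r → ℕ | ∀ i j, ¬ i < j → m i j = 0},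
    (∏ i, ∏ j, if i < j then (pfEps (m i j) : R) else 1) * ∏ i, c i (pfIdx α m i)

/-- The alphabet of primed, unmarked and circled numbers. -/
inductive MSTEntry where
  | prime : ℕ → MSTEntry
  | unmarked : ℕ → MSTEntry
  | circ : ℕ → MSTEntry
deriving DecidableEq

namespace MSTEntry

/-- Whether an entry is circled (`1`) or not (`0`). -/
def isCirc : MSTEntry → ℕ
  | circ _ => 1
  | _ => 0

/-- Key realizing the order `1' < 1 < 2' < 2 < ⋯` within each class. -/
def key : MSTEntry → ℕ
  | prime k => 2 * k - 1
  | unmarked k => 2 * k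
  | circ k => k

/-- The numeric value of an entry. -/
def val : MSTEntry → ℕ
  | prime k => k
  | unmarked k => k
  | circ k => k

/-- The total order `1' < 1 < 2' < 2 < ⋯ < 1° < 2° < ⋯` on entries of positive value. -/
def le (a b : MSTEntry) : Prop :=
  a.isCirc < b.isCirc ∨ (a.isCirc = b.isCirc ∧ a.key ≤ b.key)

end MSTEntry

/-- The shifted Young diagram of a strict partition `λ` of length `r`:
boxes `(i, j)` with `1 ≤ i ≤ r` and `i ≤ j ≤ λ_i + i - 1` (rows and columns 1-indexed). -/
def shiftedDiag (r : ℕ) (lam : ℕ → ℕ) : Set (ℕ × ℕ) :=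
  {p | 1 ≤ p.1 ∧ p.1 ≤ r ∧ p.1 ≤ p.2 ∧ p.2 ≤ lam p.1 + p.1 - 1}

/-- `T` is a marked shifted tableau of the flagged strict partition `(λ, f)` whose unmarked
and primed entries have numeric value at most `n` (normalized to `unmarked 0` off the
diagram). -/
def IsMST (n r : ℕ) (lam f : ℕ → ℕ) (T : ℕ × ℕ → MSTEntry) : Prop :=
  (∀ p, p ∉ shiftedDiag r lam → T p = .unmarked 0) ∧
  (∀ p ∈ shiftedDiag r lam, 1 ≤ (T p).val) ∧
  (∀ i j j', (i, j) ∈ shiftedDiag r lam → (i, j') ∈ shiftedDiag r lam → j ≤ j' →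
    (T (i, j)).le (T (i, j'))) ∧
  (∀ i i' j, (i, j) ∈ shiftedDiag r lam → (i', j) ∈ shiftedDiag r lam → i ≤ i' →
    (T (i, j)).le (T (i', j))) ∧
  (∀ i i' j k k', (i, j) ∈ shiftedDiag r lam → (i', j) ∈ shiftedDiag r lam → i < i' →
    T (i, j) = .unmarked k → T (i', j) = .unmarked k' → k < k') ∧
  (∀ i j j' k k', (i, j) ∈ shiftedDiag r lam → (i, j') ∈ shiftedDiag r lam → j < j' →
    T (i, j) = .prime k → T (i, j') = .prime k' → k < k') ∧
  (∀ i j j' k k', (i, j) ∈ shiftedDiag r lam → (i, j') ∈ shiftedDiag r lam → j < j' →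
    T (i, j) = .circ k → T (i, j') = .circ k' → k < k') ∧
  (∀ p ∈ shiftedDiag r lam, (T p).le (.circ (f p.1))) ∧
  (∀ p ∈ shiftedDiag r lam, ∀ k, (T p = .unmarked k ∨ T p = .prime k) → k ≤ n)

/-- The factor of the weight `(xz|b)^T` contributed by the entry at box `p`.  The convention
`b_{-i} = -b_{i+1}` is implemented by `bext`. -/
def mstFactor (x z : ℕ → R) (b : ℤ → R) (p : ℕ × ℕ) : MSTEntry → R
  | .unmarked k => x k + bext b ((p.2 : ℤ) - (p.1 : ℤ))
  | .prime k => x k - bext b ((p.2 : ℤ) - (p.1 : ℤ))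
  | .circ k => z k + bext b ((k : ℤ) + (p.1 : ℤ) - (p.2 : ℤ))

/-- The weight `(xz|b)^T` of a marked shifted tableau. -/
def mstWeight (r : ℕ) (lam : ℕ → ℕ) (x z : ℕ → R) (b : ℤ → R) (T : ℕ × ℕ → MSTEntry) : R :=
  ∏ i ∈ Finset.range r, ∏ j ∈ Finset.range (lam (i + 1)),
    mstFactor x z b (i + 1, i + 1 + j) (T (i + 1, i + 1 + j))

/-- The flagged factorial Q-function `Q_{λ,f}(x;z|b)`, with `n` x-variables. -/
def Qflag (n r : ℕ) (lam f : ℕ → ℕ) (x z : ℕ → R) (b : ℤ → R) : R :=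
  ∑ᶠ T ∈ {T : ℕ × ℕ → MSTEntry | IsMST n r lam f T}, mstWeight r lam x z b T

/-- Ivanov's factorial Q-function `Q_λ(x|b)`: the case of the zero flag (no circled
entries, so the z-variables do not occur). -/
def QIvanov (n r : ℕ) (lam : ℕ → ℕ) (x : ℕ → R) (b : ℤ → R) : R :=
  Qflag n r lam (fun _ => 0) x (fun _ => 0) b

/-- The skew Young diagram `κ/ν`: boxes `(i, j)` with `1 ≤ i ≤ r`, `ν_i < j ≤ κ_i`. -/
def skewDiag (r : ℕ) (kap nu : ℕ → ℕ) : Set (ℕ × ℕ) :=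
  {p | 1 ≤ p.1 ∧ p.1 ≤ r ∧ nu p.1 < p.2 ∧ p.2 ≤ kap p.1}

/-- `t` is a row-strict flagged tableau of `(κ/ν, f)` (normalized to `0` off the diagram). -/
def IsRST (r : ℕ) (kap nu f : ℕ → ℕ) (t : ℕ × ℕ → ℕ) : Prop :=
  (∀ p, p ∉ skewDiag r kap nu → t p = 0) ∧
  (∀ p ∈ skewDiag r kap nu, 1 ≤ t p) ∧
  (∀ i j j', (i, j) ∈ skewDiag r kap nu → (i, j') ∈ skewDiag r kap nu → j < j' →
    t (i, j) < t (i, j')) ∧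
  (∀ i i' j, (i, j) ∈ skewDiag r kap nu → (i', j) ∈ skewDiag r kap nu → i ≤ i' →
    t (i, j) ≤ t (i', j)) ∧
  (∀ p ∈ skewDiag r kap nu, t p ≤ f p.1)

/-- The weight `∏_{e ∈ T} (z_{|e|} + b_{|e| + r(e) - c(e)})` of a row-strict flagged tableau. -/
def rstWeight (r : ℕ) (kap nu : ℕ → ℕ) (z : ℕ → R) (b : ℤ → R) (t : ℕ × ℕ → ℕ) : R :=
  ∏ i ∈ Finset.range r, ∏ j ∈ Finset.range (kap (i + 1) - nu (i + 1)),
    (z (t (i + 1, nu (i + 1) + 1 + j)) +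
      b ((t (i + 1, nu (i + 1) + 1 + j) : ℤ) + ((i : ℤ) + 1) - ((nu (i + 1) : ℤ) + 1 + (j : ℤ))))

/-- The row-strict flagged skew factorial Schur polynomial `s̃_{κ/ν,f}(z|b)`. -/
def sTilde (r : ℕ) (kap nu f : ℕ → ℕ) (z : ℕ → R) (b : ℤ → R) : R :=
  ∑ᶠ t ∈ {t : ℕ × ℕ → ℕ | IsRST r kap nu f t}, rstWeight r kap nu z b t


/-- The factor of the weight `(xb)^T`: `x_k` for unmarked or primed `k`, `b_k` for circled. -/
def mstXBFactor (x : ℕ → R) (b : ℤ → R) : MSTEntry → R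
  | .unmarked k => x k
  | .prime k => x k
  | .circ k => b k

/-- The weight `(xb)^T = ∏_{k∈T} x_k · ∏_{k'∈T} x_k · ∏_{k°∈T} b_k`. -/
def mstXBWeight (r : ℕ) (lam : ℕ → ℕ) (x : ℕ → R) (b : ℤ → R) (T : ℕ × ℕ → MSTEntry) : R :=
  ∏ i ∈ Finset.range r, ∏ j ∈ Finset.range (lam (i + 1)),
    mstXBFactor x b (T (i + 1, i + 1 + j))

/-- The weight `∏_{e ∈ T} b_{|e|}` of a row-strict flagged tableau. -/
def rstBWeight (r : ℕ) (kap nu : ℕ → ℕ) (b : ℤ → R) (t : ℕ × ℕ → ℕ) : R :=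
  ∏ i ∈ Finset.range r, ∏ j ∈ Finset.range (kap (i + 1) - nu (i + 1)),
    b (t (i + 1, nu (i + 1) + 1 + j) : ℤ)

/-- `s̃_{κ/ν,f}(b)`: the generating function of row-strict flagged tableaux with weight
`∏_{e ∈ T} b_{|e|}`. -/
def sTildeB (r : ℕ) (kap nu f : ℕ → ℕ) (b : ℤ → R) : R :=
  ∑ᶠ t ∈ {t : ℕ × ℕ → ℕ | IsRST r kap nu f t}, rstBWeight r kap nu b t

/-- `μ` (normalized to vanish outside `[1,r]`) is a strict partition contained in `λ`,
padded by zeros to `r` parts, such that `μ̄ = (μ_1, μ_2 + 1, …, μ_r + r - 1)` is a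
partition. -/
def IsBarMu (r : ℕ) (lam mu : ℕ → ℕ) : Prop :=
  (∀ i, i = 0 ∨ r < i → mu i = 0) ∧
  (∀ i, 1 ≤ i → i < r → mu (i + 1) ≤ mu i) ∧
  (∀ i, 1 ≤ i → i < r → 0 < mu (i + 1) → mu (i + 1) < mu i) ∧
  (∀ i, 1 ≤ i → i ≤ r → mu i ≤ lam i) ∧
  (∀ i, 1 ≤ i → i < r → mu (i + 1) + (i + 1) ≤ mu i + i)

/-!
Since circled letters exceed all others, the non-circled entries of each row of a tableau
`T ∈ MST(λ, f)` form a prefix, say of length `μ_i`. The non-circled part is then a marked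
shifted tableau of shape `μ` with no circled entries, weighted as in `Q_μ(x|b)`, while the
circled part fills `λ̄/μ̄` and, read as plain numbers, is a row-strict tableau flagged by `f`
whose weight is the `⋆`-substituted weight of `s̃_{λ̄/μ̄,f}`. Weak increase down columns,
together with `λ_{i+1} < λ_i`, gives `μ_{i+1} < μ_i` whenever `μ_{i+1} > 0`; and
`μ_i = μ_{i+1} = 0` would make all rows from `i` on entirely circled, which needs
`λ_k ≤ f_k` in rows `r - 1` and `r` (a row of `λ_k` strictly increasing circled letters at
most `f_k°`). Conversely every such pair glues back, so splitting is a weight-preserving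
bijection onto the index set of the right-hand side.
-/

namespace MSTEntry

def circVal : MSTEntry → ℕ
  | circ k => k
  | _ => 0

theorem isCirc_le_isCirc {a b : MSTEntry} (h : a.le b) : a.isCirc ≤ b.isCirc := by
  rcases h with h | ⟨h, -⟩ <;> omega

@[simp]
theorem circ_le_circ_iff {k m : ℕ} : (circ k).le (circ m) ↔ k ≤ m := by
  simp [le, isCirc, key]

theorem le_circ_of_isCirc_eq_zero {a : MSTEntry} (h : a.isCirc = 0) (m : ℕ) : a.le (circ m) :=
  Or.inl (by rw [h]; exact Nat.one_pos)

theorem eq_circ_of_isCirc_ne_zero {a : MSTEntry} (h : a.isCirc ≠ 0) : a = circ a.circVal := by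
  cases a <;> simp_all [isCirc, circVal]

theorem circVal_eq_zero_of_isCirc_eq_zero {a : MSTEntry} (h : a.isCirc = 0) : a.circVal = 0 := by
  cases a <;> simp_all [isCirc, circVal]

theorem finite_setOf_val_le (N : ℕ) : {e : MSTEntry | e.val ≤ N}.Finite := by
  refine ((((Set.finite_Iic N).image prime).union ((Set.finite_Iic N).image unmarked)).union
    ((Set.finite_Iic N).image circ)).subset ?_
  rintro (k | k | k) hk
  exacts [.inl (.inl ⟨k, hk, rfl⟩), .inl (.inr ⟨k, hk, rfl⟩), .inr ⟨k, hk, rfl⟩]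

end MSTEntry

open MSTEntry

theorem finite_setOf_eq_off_mem_on {α β : Type*} {K : Set α} {V : Set β} (hK : K.Finite)
    (hV : V.Finite) (d : β) :
    {F : α → β | (∀ a ∉ K, F a = d) ∧ ∀ a ∈ K, F a ∈ V}.Finite := by
  have : Finite K := hK
  refine Set.Finite.of_finite_image (f := fun F (a : K) => F a) ?_ ?_
  · refine (Set.Finite.pi' fun _ : K => hV).subset ?_
    rintro _ ⟨F, ⟨-, hF⟩, rfl⟩ a
    exact hF a a.2
  · intro F hF G hG h
    funext a
    by_cases ha : a ∈ K
    · exact congrFun h ⟨a, ha⟩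
    · rw [hF.1 a ha, hG.1 a ha]

theorem finsum_mem_setOf_triple_mul {ι β γ S : Type*} [CommSemiring S] {M : Set ι}
    {A : ι → Set β} {B : ι → Set γ} (hM : M.Finite) (hA : ∀ i, (A i).Finite)
    (hB : ∀ i, (B i).Finite) (u : ι → β → S) (v : ι → γ → S) :
    ∑ᶠ q ∈ {q : ι × β × γ | q.1 ∈ M ∧ q.2.1 ∈ A q.1 ∧ q.2.2 ∈ B q.1}, u q.1 q.2.1 * v q.1 q.2.2 =
      ∑ᶠ i ∈ M, (∑ᶠ b ∈ A i, u i b) * ∑ᶠ c ∈ B i, v i c := by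
  have hP : {q : ι × β × γ | q.1 ∈ M ∧ q.2.1 ∈ A q.1 ∧ q.2.2 ∈ B q.1}.Finite := by
    refine (hM.biUnion fun i _ => ((hA i).prod (hB i)).image (Prod.mk i)).subset ?_
    rintro ⟨i, b, c⟩ ⟨hi, hb, hc⟩
    exact Set.mem_biUnion hi ⟨(b, c), ⟨hb, hc⟩, rfl⟩
  rw [finsum_mem_eq_finite_toFinset_sum _ hP, finsum_mem_eq_finite_toFinset_sum _ hM,
    Finset.sum_finset_product _ hM.toFinset (fun i => (hA i).toFinset ×ˢ (hB i).toFinset)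
      (by simp)]
  refine Finset.sum_congr rfl fun i _ => ?_
  rw [finsum_mem_eq_finite_toFinset_sum _ (hA i), finsum_mem_eq_finite_toFinset_sum _ (hB i),
    Finset.sum_mul_sum, Finset.sum_product]

theorem lt_card_filter_range_iff {L j : ℕ} {P : ℕ → Prop} [DecidablePred P]
    (hP : ∀ j j', j ≤ j' → j' < L → P j' → P j) (hj : j < L) :
    j < ((range L).filter P).card ↔ P j := by
  constructor
  · intro hlt
    by_contra hPj
    have hsub : (range L).filter P ⊆ range j := fun a ha => by
      simp only [mem_filter, mem_range] at ha ⊢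
      by_contra hja
      exact hPj (hP j a (by omega) ha.1 ha.2)
    simpa using (card_le_card hsub).trans_lt' hlt
  · intro hPj
    have hsub : range (j + 1) ⊆ (range L).filter P := fun a ha => by
      simp only [mem_filter, mem_range] at ha ⊢
      exact ⟨by omega, hP a j (by omega) hj hPj⟩
    simpa using card_le_card hsub

def shiftBar (mu : ℕ → ℕ) : ℕ → ℕ := fun i => mu i + i - 1

section Diagrams

variable {r : ℕ} {lam mu : ℕ → ℕ}

theorem mem_shiftedDiag_iff {i j : ℕ} :
    (i, j) ∈ shiftedDiag r lam ↔ 1 ≤ i ∧ i ≤ r ∧ i ≤ j ∧ j ≤ lam i + i - 1 := Iff.rfl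

theorem mem_skewDiag_shiftBar_iff {p : ℕ × ℕ} :
    p ∈ skewDiag r (shiftBar lam) (shiftBar mu) ↔
      p ∈ shiftedDiag r lam ∧ p ∉ shiftedDiag r mu := by
  simp only [skewDiag, shiftedDiag, shiftBar, Set.mem_ofPred_eq]
  omega

theorem mem_shiftedDiag_or_mem_skewDiag {p : ℕ × ℕ} (hp : p ∈ shiftedDiag r lam) :
    p ∈ shiftedDiag r mu ∨ p ∈ skewDiag r (shiftBar lam) (shiftBar mu) := by
  by_cases hm : p ∈ shiftedDiag r mu
  · exact .inl hm
  · exact .inr (mem_skewDiag_shiftBar_iff.2 ⟨hp, hm⟩)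

theorem shiftedDiag_subset_shiftedDiag (h : ∀ i, 1 ≤ i → i ≤ r → mu i ≤ lam i) :
    shiftedDiag r mu ⊆ shiftedDiag r lam := by
  rintro ⟨i, j⟩ ⟨h1, h2, h3, h4 : j ≤ mu i + i - 1⟩
  exact ⟨h1, h2, h3, show j ≤ lam i + i - 1 by have := h i h1 h2; omega⟩

theorem le_sup_range (g : ℕ → ℕ) {i : ℕ} (h : i ≤ r) : g i ≤ (range (r + 1)).sup g :=
  le_sup (mem_range.2 (Nat.lt_succ_of_le h))

theorem shiftedDiag_finite (r : ℕ) (lam : ℕ → ℕ) : (shiftedDiag r lam).Finite := by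
  refine ((Set.finite_Iic r).prod (Set.finite_Iic ((range (r + 1)).sup lam + r))).subset ?_
  rintro ⟨i, j⟩ ⟨-, h2, -, h4⟩
  have := le_sup_range lam h2
  exact ⟨h2, show j ≤ _ by omega⟩

theorem skewDiag_finite (r : ℕ) (kap nu : ℕ → ℕ) : (skewDiag r kap nu).Finite := by
  refine ((Set.finite_Iic r).prod (Set.finite_Iic ((range (r + 1)).sup kap))).subset ?_
  rintro ⟨i, j⟩ ⟨-, h2, -, h4⟩
  exact ⟨h2, h4.trans (le_sup_range kap h2)⟩

end Diagrams

theorem IsMST.val_le {n r : ℕ} {lam f : ℕ → ℕ} {T : ℕ × ℕ → MSTEntry} (hT : IsMST n r lam f T)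
    {p : ℕ × ℕ} (hp : p ∈ shiftedDiag r lam) : (T p).val ≤ max n (f p.1) := by
  obtain ⟨-, -, -, -, -, -, -, hflag, hn⟩ := hT
  cases h : T p with
  | prime k => simpa [MSTEntry.val] using Or.inl (hn p hp k (.inr h))
  | unmarked k => simpa [MSTEntry.val] using Or.inl (hn p hp k (.inl h))
  | circ k =>
    have hk := hflag p hp
    rw [h, circ_le_circ_iff] at hk
    simpa [MSTEntry.val] using Or.inr hk

theorem isMST_finite (n r : ℕ) (lam f : ℕ → ℕ) :
    {T : ℕ × ℕ → MSTEntry | IsMST n r lam f T}.Finite := by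
  refine (finite_setOf_eq_off_mem_on (shiftedDiag_finite r lam)
    (finite_setOf_val_le (max n ((range (r + 1)).sup f))) (.unmarked 0)).subset ?_
  refine fun T hT => ⟨hT.1, fun p hp => (hT.val_le hp).trans ?_⟩
  exact max_le_max le_rfl (le_sup_range f hp.2.1)

theorem isRST_finite (r : ℕ) (kap nu f : ℕ → ℕ) :
    {t : ℕ × ℕ → ℕ | IsRST r kap nu f t}.Finite := by
  refine (finite_setOf_eq_off_mem_on (skewDiag_finite r kap nu)
    (Set.finite_Iic ((range (r + 1)).sup f)) 0).subset ?_
  exact fun t ht => ⟨ht.1, fun p hp => (ht.2.2.2.2 p hp).trans (le_sup_range f hp.2.1)⟩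

theorem isBarMu_finite (r : ℕ) (lam : ℕ → ℕ) : {mu : ℕ → ℕ | IsBarMu r lam mu}.Finite := by
  refine (finite_setOf_eq_off_mem_on (Set.finite_Icc 1 r)
    (Set.finite_Iic ((range (r + 1)).sup lam)) 0).subset ?_
  refine fun mu hmu => ⟨fun i hi => hmu.1 i ?_, fun i hi => ?_⟩
  · simp only [Set.mem_Icc] at hi
    omega
  · exact (hmu.2.2.2.1 i hi.1 hi.2).trans (le_sup_range lam hi.2)

theorem isBarMu_of_lt {r : ℕ} {lam mu : ℕ → ℕ} (hzero : ∀ i, i = 0 ∨ r < i → mu i = 0)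
    (hle : ∀ i, 1 ≤ i → i ≤ r → mu i ≤ lam i) (hlt : ∀ i, 1 ≤ i → i < r → mu (i + 1) < mu i) :
    IsBarMu r lam mu :=
  ⟨hzero, fun i h1 h2 => (hlt i h1 h2).le, fun i h1 h2 _ => hlt i h1 h2, hle,
    fun i h1 h2 => by have := hlt i h1 h2; omega⟩

theorem IsBarMu.add_le_add {r : ℕ} {lam mu : ℕ → ℕ} (hmu : IsBarMu r lam mu) {i i' : ℕ}
    (h1 : 1 ≤ i) (h2 : i ≤ i') (h3 : i' ≤ r) : mu i' + i' ≤ mu i + i := by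
  induction i', h2 using Nat.le_induction with
  | base => rfl
  | succ k hik ih =>
    have := hmu.2.2.2.2 k (by omega) (by omega)
    have := ih (by omega)
    omega

def uncircShape (r : ℕ) (lam : ℕ → ℕ) (T : ℕ × ℕ → MSTEntry) (i : ℕ) : ℕ :=
  if 1 ≤ i ∧ i ≤ r then ((range (lam i)).filter fun j => (T (i, i + j)).isCirc = 0).card else 0

def circVals (T : ℕ × ℕ → MSTEntry) : ℕ × ℕ → ℕ := fun p => (T p).circVal

open scoped Classical in
def restrictTab (r : ℕ) (mu : ℕ → ℕ) (T : ℕ × ℕ → MSTEntry) : ℕ × ℕ → MSTEntry :=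
  fun p => if p ∈ shiftedDiag r mu then T p else .unmarked 0

open scoped Classical in
def glueTab (r : ℕ) (lam mu : ℕ → ℕ) (T₁ : ℕ × ℕ → MSTEntry) (t : ℕ × ℕ → ℕ) :
    ℕ × ℕ → MSTEntry := fun p =>
  if p ∈ shiftedDiag r mu then T₁ p
  else if p ∈ skewDiag r (shiftBar lam) (shiftBar mu) then .circ (t p) else .unmarked 0

def decompose (r : ℕ) (lam : ℕ → ℕ) (T : ℕ × ℕ → MSTEntry) :
    (ℕ → ℕ) × (ℕ × ℕ → MSTEntry) × (ℕ × ℕ → ℕ) :=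
  (uncircShape r lam T, restrictTab r (uncircShape r lam T) T, circVals T)

section UncircShape

variable {r : ℕ} {lam : ℕ → ℕ} {T : ℕ × ℕ → MSTEntry}

theorem uncircShape_le (i : ℕ) : uncircShape r lam T i ≤ lam i := by
  unfold uncircShape
  split_ifs
  · exact (card_filter_le _ _).trans (card_range _).le
  · exact Nat.zero_le _

theorem uncircShape_eq_zero {i : ℕ} (hi : i = 0 ∨ r < i) : uncircShape r lam T i = 0 :=
  if_neg (by omega)

theorem shiftedDiag_uncircShape_subset :
    shiftedDiag r (uncircShape r lam T) ⊆ shiftedDiag r lam :=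
  shiftedDiag_subset_shiftedDiag fun i _ _ => uncircShape_le i

end UncircShape

namespace IsMST

variable {n r : ℕ} {lam f : ℕ → ℕ} {T : ℕ × ℕ → MSTEntry}

theorem isCirc_eq_zero_iff (hT : IsMST n r lam f T) {p : ℕ × ℕ} (hp : p ∈ shiftedDiag r lam) :
    (T p).isCirc = 0 ↔ p ∈ shiftedDiag r (uncircShape r lam T) := by
  have ⟨_, _, hrow, _⟩ := hT
  obtain ⟨i, j⟩ := p
  obtain ⟨hi, hir, hij, hjl⟩ := mem_shiftedDiag_iff.1 hp
  have hprefix : ∀ a c, a ≤ c → c < lam i → (T (i, i + c)).isCirc = 0 →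
      (T (i, i + a)).isCirc = 0 := by
    intro a c hac hc h0
    have := isCirc_le_isCirc (hrow i (i + a) (i + c)
      (mem_shiftedDiag_iff.2 ⟨hi, hir, by omega, by omega⟩)
      (mem_shiftedDiag_iff.2 ⟨hi, hir, by omega, by omega⟩) (by omega))
    omega
  have key := lt_card_filter_range_iff hprefix (j := j - i) (by omega)
  rw [show i + (j - i) = j by omega] at key
  rw [← key, mem_shiftedDiag_iff, uncircShape, if_pos ⟨hi, hir⟩]
  omega

theorem uncircShape_succ_lt_of_pos (hT : IsMST n r lam f T)
    (hstrict : ∀ i j, 1 ≤ i → i < j → j ≤ r → lam j < lam i) {i : ℕ} (hi : 1 ≤ i) (hir : i < r)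
    (hpos : 0 < uncircShape r lam T (i + 1)) :
    uncircShape r lam T (i + 1) < uncircShape r lam T i := by
  have ⟨_, _, _, hcolT, _⟩ := hT
  set m := uncircShape r lam T (i + 1)
  have hm : m ≤ lam (i + 1) := uncircShape_le (i + 1)
  have hlam := hstrict i (i + 1) hi (by omega) hir
  have hbelow : (i + 1, i + m) ∈ shiftedDiag r (uncircShape r lam T) :=
    mem_shiftedDiag_iff.2 ⟨by omega, hir, by omega, by omega⟩
  have habove : (i, i + m) ∈ shiftedDiag r lam :=
    mem_shiftedDiag_iff.2 ⟨hi, hir.le, by omega, by omega⟩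
  have hbelow' := shiftedDiag_uncircShape_subset hbelow
  have hcol := isCirc_le_isCirc (hcolT i (i + 1) (i + m) habove hbelow' (by omega))
  rw [(hT.isCirc_eq_zero_iff hbelow').2 hbelow] at hcol
  have := mem_shiftedDiag_iff.1 ((hT.isCirc_eq_zero_iff habove).1 (by omega))
  omega

theorem le_flag_of_uncircShape_eq_zero (hT : IsMST n r lam f T) {k : ℕ} (hk : 1 ≤ k)
    (hkr : k ≤ r) (h0 : uncircShape r lam T k = 0) : lam k ≤ f k := by
  have ⟨_, hval, _, _, _, _, hcirc, hflag, _⟩ := hT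
  have hbox : ∀ j < lam k, (k, k + j) ∈ shiftedDiag r lam := fun j hj =>
    mem_shiftedDiag_iff.2 ⟨hk, hkr, by omega, by omega⟩
  have heq : ∀ j < lam k, T (k, k + j) = .circ (circVals T (k, k + j)) := fun j hj =>
    eq_circ_of_isCirc_ne_zero fun hc => by
      have := mem_shiftedDiag_iff.1 ((hT.isCirc_eq_zero_iff (hbox j hj)).1 hc)
      omega
  calc lam k = (range (lam k)).card := (card_range _).symm
    _ ≤ (Icc 1 (f k)).card := by
      refine card_le_card_of_injOn (fun j => circVals T (k, k + j)) (fun j hj => ?_) ?_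
      · rw [coe_range, Set.mem_Iio] at hj
        have h1 := hval _ (hbox j hj)
        have h2 := hflag _ (hbox j hj)
        rw [heq j hj] at h1 h2
        exact mem_Icc.2 ⟨h1, circ_le_circ_iff.1 h2⟩
      · intro j hj j' hj' hjj
        rw [coe_range, Set.mem_Iio] at hj hj'
        by_contra hne
        rcases Nat.lt_or_gt_of_ne hne with hlt | hlt
        · exact (hcirc k _ _ _ _ (hbox j hj) (hbox j' hj') (by omega) (heq j hj)
            (heq j' hj')).ne hjj
        · exact (hcirc k _ _ _ _ (hbox j' hj') (hbox j hj) (by omega) (heq j' hj')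
            (heq j hj)).ne hjj.symm
    _ = f k := by simp

theorem uncircShape_succ_lt (hT : IsMST n r lam f T)
    (hstrict : ∀ i j, 1 ≤ i → i < j → j ≤ r → lam j < lam i)
    (hlast : 2 ≤ r → f (r - 1) < lam (r - 1) ∨ f r < lam r) {i : ℕ} (hi : 1 ≤ i) (hir : i < r) :
    uncircShape r lam T (i + 1) < uncircShape r lam T i := by
  by_contra hge
  have hzero : uncircShape r lam T (i + 1) = 0 := by
    by_contra hne
    exact hge (hT.uncircShape_succ_lt_of_pos hstrict hi hir (Nat.pos_of_ne_zero hne))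
  have hall : ∀ k, i ≤ k → k ≤ r → uncircShape r lam T k = 0 := by
    intro k hik
    induction k, hik using Nat.le_induction with
    | base => exact fun _ => by omega
    | succ k hik ih =>
      intro hkr
      by_contra hne
      have := hT.uncircShape_succ_lt_of_pos hstrict (by omega) hkr (Nat.pos_of_ne_zero hne)
      have := ih (by omega)
      omega
  have hflag : ∀ k, i ≤ k → k ≤ r → lam k ≤ f k := fun k hik hkr =>
    hT.le_flag_of_uncircShape_eq_zero (by omega) hkr (hall k hik hkr)
  rcases hlast (by omega) with h | h
  · exact absurd (hflag (r - 1) (by omega) (by omega)) (not_le.2 h)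
  · exact absurd (hflag r (by omega) le_rfl) (not_le.2 h)

theorem isBarMu_uncircShape (hT : IsMST n r lam f T)
    (hstrict : ∀ i j, 1 ≤ i → i < j → j ≤ r → lam j < lam i)
    (hlast : 2 ≤ r → f (r - 1) < lam (r - 1) ∨ f r < lam r) :
    IsBarMu r lam (uncircShape r lam T) :=
  isBarMu_of_lt (fun _ hi => uncircShape_eq_zero hi) (fun i _ _ => uncircShape_le i)
    fun _ hi hir => hT.uncircShape_succ_lt hstrict hlast hi hir

end IsMST

theorem mstFactor_eq_of_isCirc_eq_zero (x z z' : ℕ → R) (b : ℤ → R) (p : ℕ × ℕ) {e : MSTEntry}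
    (h : e.isCirc = 0) : mstFactor x z b p e = mstFactor x z' b p e := by
  cases e <;> simp_all [mstFactor, isCirc]

namespace IsMST

variable {n r : ℕ} {lam f : ℕ → ℕ} {T : ℕ × ℕ → MSTEntry}

theorem restrict {mu : ℕ → ℕ} (hT : IsMST n r lam f T)
    (hsub : shiftedDiag r mu ⊆ shiftedDiag r lam)
    (hnc : ∀ p ∈ shiftedDiag r mu, (T p).isCirc = 0) :
    IsMST n r mu (fun _ => 0) (restrictTab r mu T) := by
  obtain ⟨-, hval, hrow, hcol, hunm, hpr, hcirc, -, hn⟩ := hT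
  have heq : ∀ p ∈ shiftedDiag r mu, restrictTab r mu T p = T p := fun p hp => if_pos hp
  refine ⟨fun p hp => if_neg hp, ?_, ?_, ?_, ?_, ?_, ?_, ?_, ?_⟩
  · intro p hp
    rw [heq p hp]
    exact hval p (hsub hp)
  · intro i j j' h h'
    rw [heq _ h, heq _ h']
    exact hrow i j j' (hsub h) (hsub h')
  · intro i i' j h h'
    rw [heq _ h, heq _ h']
    exact hcol i i' j (hsub h) (hsub h')
  · intro i i' j k k' h h'
    rw [heq _ h, heq _ h']
    exact hunm i i' j k k' (hsub h) (hsub h')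
  · intro i j j' k k' h h'
    rw [heq _ h, heq _ h']
    exact hpr i j j' k k' (hsub h) (hsub h')
  · intro i j j' k k' h h'
    rw [heq _ h, heq _ h']
    exact hcirc i j j' k k' (hsub h) (hsub h')
  · intro p hp
    rw [heq p hp]
    exact le_circ_of_isCirc_eq_zero (hnc p hp) 0
  · intro p hp
    rw [heq p hp]
    exact hn p (hsub hp)

theorem restrict_uncircShape (hT : IsMST n r lam f T) :
    IsMST n r (uncircShape r lam T) (fun _ => 0) (restrictTab r (uncircShape r lam T) T) :=
  hT.restrict shiftedDiag_uncircShape_subset fun _ hp =>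
    (hT.isCirc_eq_zero_iff (shiftedDiag_uncircShape_subset hp)).2 hp

theorem eq_circ_of_mem_skewDiag (hT : IsMST n r lam f T) {p : ℕ × ℕ}
    (hp : p ∈ skewDiag r (shiftBar lam) (shiftBar (uncircShape r lam T))) :
    p ∈ shiftedDiag r lam ∧ T p = .circ (circVals T p) := by
  obtain ⟨hl, hnm⟩ := mem_skewDiag_shiftBar_iff.1 hp
  exact ⟨hl, eq_circ_of_isCirc_ne_zero fun h => hnm ((hT.isCirc_eq_zero_iff hl).1 h)⟩

theorem circVals_eq_zero (hT : IsMST n r lam f T) {p : ℕ × ℕ}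
    (hp : p ∉ skewDiag r (shiftBar lam) (shiftBar (uncircShape r lam T))) : circVals T p = 0 := by
  by_cases hl : p ∈ shiftedDiag r lam
  · have hm : p ∈ shiftedDiag r (uncircShape r lam T) := by
      by_contra hm
      exact hp (mem_skewDiag_shiftBar_iff.2 ⟨hl, hm⟩)
    exact circVal_eq_zero_of_isCirc_eq_zero ((hT.isCirc_eq_zero_iff hl).2 hm)
  · simp [circVals, hT.1 p hl, circVal]

theorem isRST_circVals (hT : IsMST n r lam f T) :
    IsRST r (shiftBar lam) (shiftBar (uncircShape r lam T)) f (circVals T) := by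
  have ⟨_, hval, _, hcol, _, _, hcirc, hflag, _⟩ := hT
  refine ⟨fun p hp => hT.circVals_eq_zero hp, fun p hp => ?_, fun i j j' h h' hjj => ?_,
    fun i i' j h h' hii => ?_, fun p hp => ?_⟩
  · obtain ⟨hl, he⟩ := hT.eq_circ_of_mem_skewDiag hp
    simpa [he, MSTEntry.val] using hval p hl
  · obtain ⟨hl, he⟩ := hT.eq_circ_of_mem_skewDiag h
    obtain ⟨hl', he'⟩ := hT.eq_circ_of_mem_skewDiag h'
    exact hcirc i j j' _ _ hl hl' hjj he he'
  · obtain ⟨hl, he⟩ := hT.eq_circ_of_mem_skewDiag h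
    obtain ⟨hl', he'⟩ := hT.eq_circ_of_mem_skewDiag h'
    simpa [he, he'] using hcol i i' j hl hl' hii
  · obtain ⟨hl, he⟩ := hT.eq_circ_of_mem_skewDiag hp
    simpa [he] using hflag p hl

theorem glueTab_decompose (hT : IsMST n r lam f T) :
    glueTab r lam (uncircShape r lam T) (restrictTab r (uncircShape r lam T) T) (circVals T) =
      T := by
  funext p
  unfold glueTab
  by_cases hm : p ∈ shiftedDiag r (uncircShape r lam T)
  · rw [if_pos hm, restrictTab, if_pos hm]
  · rw [if_neg hm]
    by_cases hs : p ∈ skewDiag r (shiftBar lam) (shiftBar (uncircShape r lam T))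
    · rw [if_pos hs]
      exact (hT.eq_circ_of_mem_skewDiag hs).2.symm
    · have hl : p ∉ shiftedDiag r lam := fun hl => hs (mem_skewDiag_shiftBar_iff.2 ⟨hl, hm⟩)
      rw [if_neg hs, hT.1 p hl]

theorem mstWeight_eq_mul (hT : IsMST n r lam f T) (x z : ℕ → R) (b : ℤ → R) :
    mstWeight r lam x z b T =
      mstWeight r (uncircShape r lam T) x (fun _ => 0) b (restrictTab r (uncircShape r lam T) T) *
        rstWeight r (shiftBar lam) (shiftBar (uncircShape r lam T)) z (bext b) (circVals T) := by
  rw [mstWeight, mstWeight, rstWeight, ← prod_mul_distrib]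
  refine prod_congr rfl fun i hi => ?_
  rw [mem_range] at hi
  set m := uncircShape r lam T (i + 1)
  have hm : m ≤ lam (i + 1) := uncircShape_le (i + 1)
  have hlen : shiftBar lam (i + 1) - shiftBar (uncircShape r lam T) (i + 1) = lam (i + 1) - m := by
    simp only [shiftBar, m]
    omega
  rw [hlen]
  conv_lhs => rw [← Nat.add_sub_of_le hm, prod_range_add]
  congr 1
  · refine prod_congr rfl fun j hj => ?_
    rw [mem_range] at hj
    have hmem : (i + 1, i + 1 + j) ∈ shiftedDiag r (uncircShape r lam T) :=
      mem_shiftedDiag_iff.2 ⟨by omega, by omega, by omega, by omega⟩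
    rw [restrictTab, if_pos hmem]
    exact mstFactor_eq_of_isCirc_eq_zero x z _ b _
      ((hT.isCirc_eq_zero_iff (shiftedDiag_uncircShape_subset hmem)).2 hmem)
  · refine prod_congr rfl fun j hj => ?_
    rw [mem_range] at hj
    have hcol : shiftBar (uncircShape r lam T) (i + 1) + 1 + j = i + 1 + (m + j) := by
      simp only [shiftBar, m]
      omega
    have hskew : (i + 1, i + 1 + (m + j)) ∈
        skewDiag r (shiftBar lam) (shiftBar (uncircShape r lam T)) :=
      mem_skewDiag_shiftBar_iff.2 ⟨mem_shiftedDiag_iff.2 ⟨by omega, by omega, by omega, by omega⟩,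
        fun h => by have := (mem_shiftedDiag_iff.1 h).2.2.2; omega⟩
    rw [(hT.eq_circ_of_mem_skewDiag hskew).2, ← hcol]
    simp only [mstFactor]
    push_cast
    rfl

end IsMST

theorem IsMST.isCirc_eq_zero_of_zero_flag {n r : ℕ} {mu : ℕ → ℕ} {T : ℕ × ℕ → MSTEntry}
    (hT : IsMST n r mu (fun _ => 0) T) {p : ℕ × ℕ} (hp : p ∈ shiftedDiag r mu) :
    (T p).isCirc = 0 := by
  obtain ⟨-, hval, -, -, -, -, -, hflag, -⟩ := hT
  by_contra hc
  have h1 := hval p hp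
  have h2 := hflag p hp
  rw [eq_circ_of_isCirc_ne_zero hc] at h1 h2
  have : (T p).circVal ≤ 0 := circ_le_circ_iff.1 h2
  exact absurd h1 (by simp only [MSTEntry.val]; omega)

section Glue

variable {n r : ℕ} {lam f mu : ℕ → ℕ} {T₁ : ℕ × ℕ → MSTEntry} {t : ℕ × ℕ → ℕ} {p : ℕ × ℕ}

theorem glueTab_of_mem (hp : p ∈ shiftedDiag r mu) : glueTab r lam mu T₁ t p = T₁ p :=
  if_pos hp

theorem glueTab_of_mem_skewDiag (hp : p ∈ skewDiag r (shiftBar lam) (shiftBar mu)) :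
    glueTab r lam mu T₁ t p = .circ (t p) := by
  rw [glueTab, if_neg (mem_skewDiag_shiftBar_iff.1 hp).2, if_pos hp]

theorem glueTab_of_not_mem (hmu : IsBarMu r lam mu) (hp : p ∉ shiftedDiag r lam) :
    glueTab r lam mu T₁ t p = .unmarked 0 := by
  rw [glueTab, if_neg fun h => hp (shiftedDiag_subset_shiftedDiag hmu.2.2.2.1 h),
    if_neg fun h => hp (mem_skewDiag_shiftBar_iff.1 h).1]

theorem glueTab_eq_of_isCirc_eq_zero (hp : p ∈ shiftedDiag r lam)
    (h : (glueTab r lam mu T₁ t p).isCirc = 0) :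
    p ∈ shiftedDiag r mu ∧ glueTab r lam mu T₁ t p = T₁ p := by
  refine (mem_shiftedDiag_or_mem_skewDiag hp).elim (fun hm => ⟨hm, glueTab_of_mem hm⟩)
    fun hs => ?_
  rw [glueTab_of_mem_skewDiag hs] at h
  exact absurd h one_ne_zero

theorem mem_skewDiag_of_glueTab_eq_circ (hT₁ : IsMST n r mu (fun _ => 0) T₁)
    (hp : p ∈ shiftedDiag r lam) {k : ℕ} (h : glueTab r lam mu T₁ t p = .circ k) :
    p ∈ skewDiag r (shiftBar lam) (shiftBar mu) ∧ t p = k := by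
  refine (mem_shiftedDiag_or_mem_skewDiag (mu := mu) hp).elim (fun hm => ?_) fun hs => ?_
  · have := hT₁.isCirc_eq_zero_of_zero_flag hm
    rw [← glueTab_of_mem (lam := lam) (T₁ := T₁) (t := t) hm, h] at this
    exact absurd this one_ne_zero
  · rw [glueTab_of_mem_skewDiag hs] at h
    exact ⟨hs, circ.inj h⟩

theorem glueTab_le (hT₁ : IsMST n r mu (fun _ => 0) T₁) {q : ℕ × ℕ}
    (hp : p ∈ shiftedDiag r lam) (hq : q ∈ shiftedDiag r lam)
    (hmem : q ∈ shiftedDiag r mu → p ∈ shiftedDiag r mu)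
    (hT₁le : p ∈ shiftedDiag r mu → q ∈ shiftedDiag r mu → (T₁ p).le (T₁ q))
    (htle : p ∈ skewDiag r (shiftBar lam) (shiftBar mu) →
      q ∈ skewDiag r (shiftBar lam) (shiftBar mu) → t p ≤ t q) :
    (glueTab r lam mu T₁ t p).le (glueTab r lam mu T₁ t q) := by
  rcases mem_shiftedDiag_or_mem_skewDiag hq with hq' | hq'
  · rw [glueTab_of_mem (hmem hq'), glueTab_of_mem hq']
    exact hT₁le (hmem hq') hq'
  · rw [glueTab_of_mem_skewDiag hq']
    rcases mem_shiftedDiag_or_mem_skewDiag hp with hp' | hp'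
    · rw [glueTab_of_mem hp']
      exact le_circ_of_isCirc_eq_zero (hT₁.isCirc_eq_zero_of_zero_flag hp') _
    · rw [glueTab_of_mem_skewDiag hp']
      exact circ_le_circ_iff.2 (htle hp' hq')

theorem glueTab_row_le (hT₁ : IsMST n r mu (fun _ => 0) T₁)
    (ht : IsRST r (shiftBar lam) (shiftBar mu) f t) {i j j' : ℕ}
    (h : (i, j) ∈ shiftedDiag r lam) (h' : (i, j') ∈ shiftedDiag r lam) (hjj : j ≤ j') :
    (glueTab r lam mu T₁ t (i, j)).le (glueTab r lam mu T₁ t (i, j')) := by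
  refine glueTab_le hT₁ h h' (fun hm => ?_) (fun hm hm' => hT₁.2.2.1 i j j' hm hm' hjj)
    fun hs hs' => ?_
  · obtain ⟨-, -, -, hj'⟩ := mem_shiftedDiag_iff.1 hm
    obtain ⟨h1, h2, h3, -⟩ := mem_shiftedDiag_iff.1 h
    exact mem_shiftedDiag_iff.2 ⟨h1, h2, h3, by omega⟩
  · rcases hjj.eq_or_lt with rfl | hlt
    · exact le_rfl
    · exact (ht.2.2.1 i j j' hs hs' hlt).le

theorem glueTab_col_le (hmu : IsBarMu r lam mu) (hT₁ : IsMST n r mu (fun _ => 0) T₁)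
    (ht : IsRST r (shiftBar lam) (shiftBar mu) f t) {i i' j : ℕ}
    (h : (i, j) ∈ shiftedDiag r lam) (h' : (i', j) ∈ shiftedDiag r lam) (hii : i ≤ i') :
    (glueTab r lam mu T₁ t (i, j)).le (glueTab r lam mu T₁ t (i', j)) := by
  refine glueTab_le hT₁ h h' (fun hm => ?_) (fun hm hm' => hT₁.2.2.2.1 i i' j hm hm' hii)
    fun hs hs' => ht.2.2.2.1 i i' j hs hs' hii
  obtain ⟨-, h2', -, hj'⟩ := mem_shiftedDiag_iff.1 hm
  obtain ⟨h1, h2, h3, -⟩ := mem_shiftedDiag_iff.1 h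
  have := hmu.add_le_add h1 hii h2'
  exact mem_shiftedDiag_iff.2 ⟨h1, h2, h3, by omega⟩

theorem IsMST.glue (hmu : IsBarMu r lam mu) (hT₁ : IsMST n r mu (fun _ => 0) T₁)
    (ht : IsRST r (shiftBar lam) (shiftBar mu) f t) :
    IsMST n r lam f (glueTab r lam mu T₁ t) := by
  have ⟨_, hval, _, _, hunm, hpr, _, _, hn⟩ := hT₁
  have ⟨_, htval, htrow, _, htflag⟩ := ht
  refine ⟨fun p hp => glueTab_of_not_mem hmu hp, fun p hp => ?_,
    fun i j j' h h' hjj => glueTab_row_le hT₁ ht h h' hjj,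
    fun i i' j h h' hii => glueTab_col_le hmu hT₁ ht h h' hii,
    fun i i' j k k' h h' hii hk hk' => ?_, fun i j j' k k' h h' hjj hk hk' => ?_,
    fun i j j' k k' h h' hjj hk hk' => ?_, fun p hp => ?_, fun p hp k hk => ?_⟩
  · rcases mem_shiftedDiag_or_mem_skewDiag hp with hm | hs
    · rw [glueTab_of_mem hm]
      exact hval p hm
    · rw [glueTab_of_mem_skewDiag hs]
      exact htval p hs
  · obtain ⟨hm, he⟩ := glueTab_eq_of_isCirc_eq_zero h (by rw [hk]; rfl)
    obtain ⟨hm', he'⟩ := glueTab_eq_of_isCirc_eq_zero h' (by rw [hk']; rfl)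
    exact hunm i i' j k k' hm hm' hii (he ▸ hk) (he' ▸ hk')
  · obtain ⟨hm, he⟩ := glueTab_eq_of_isCirc_eq_zero h (by rw [hk]; rfl)
    obtain ⟨hm', he'⟩ := glueTab_eq_of_isCirc_eq_zero h' (by rw [hk']; rfl)
    exact hpr i j j' k k' hm hm' hjj (he ▸ hk) (he' ▸ hk')
  · obtain ⟨hs, rfl⟩ := mem_skewDiag_of_glueTab_eq_circ hT₁ h hk
    obtain ⟨hs', rfl⟩ := mem_skewDiag_of_glueTab_eq_circ hT₁ h' hk'
    exact htrow i j j' hs hs' hjj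
  · rcases mem_shiftedDiag_or_mem_skewDiag hp with hm | hs
    · rw [glueTab_of_mem hm]
      exact le_circ_of_isCirc_eq_zero (hT₁.isCirc_eq_zero_of_zero_flag hm) _
    · rw [glueTab_of_mem_skewDiag hs]
      exact circ_le_circ_iff.2 (htflag p hs)
  · obtain ⟨hm, he⟩ :=
      glueTab_eq_of_isCirc_eq_zero hp (by rcases hk with hk | hk <;> rw [hk] <;> rfl)
    exact hn p hm k (he ▸ hk)

theorem uncircShape_glueTab (hmu : IsBarMu r lam mu) (hT₁ : IsMST n r mu (fun _ => 0) T₁) :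
    uncircShape r lam (glueTab r lam mu T₁ t) = mu := by
  funext i
  by_cases hi : 1 ≤ i ∧ i ≤ r
  · rw [uncircShape, if_pos hi, ← card_range (mu i)]
    congr 1
    ext j
    have hle := hmu.2.2.2.1 i hi.1 hi.2
    simp only [mem_filter, mem_range]
    constructor
    · rintro ⟨hj, hc⟩
      have := mem_shiftedDiag_iff.1
        (glueTab_eq_of_isCirc_eq_zero (mem_shiftedDiag_iff.2 ⟨hi.1, hi.2, by omega, by omega⟩)
          hc).1
      omega
    · intro hj
      have hm : (i, i + j) ∈ shiftedDiag r mu :=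
        mem_shiftedDiag_iff.2 ⟨hi.1, hi.2, by omega, by omega⟩
      rw [glueTab_of_mem hm]
      exact ⟨by omega, hT₁.isCirc_eq_zero_of_zero_flag hm⟩
  · rw [uncircShape_eq_zero (by omega), hmu.1 i (by omega)]

theorem restrictTab_glueTab (hT₁ : IsMST n r mu (fun _ => 0) T₁) :
    restrictTab r mu (glueTab r lam mu T₁ t) = T₁ := by
  funext p
  by_cases hp : p ∈ shiftedDiag r mu
  · rw [restrictTab, if_pos hp, glueTab_of_mem hp]
  · rw [restrictTab, if_neg hp, hT₁.1 p hp]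

theorem circVals_glueTab (hmu : IsBarMu r lam mu) (hT₁ : IsMST n r mu (fun _ => 0) T₁)
    (ht : IsRST r (shiftBar lam) (shiftBar mu) f t) : circVals (glueTab r lam mu T₁ t) = t := by
  funext p
  by_cases hs : p ∈ skewDiag r (shiftBar lam) (shiftBar mu)
  · rw [circVals, glueTab_of_mem_skewDiag hs, circVal]
  · rw [ht.1 p hs]
    by_cases hm : p ∈ shiftedDiag r mu
    · rw [circVals, glueTab_of_mem hm]
      exact circVal_eq_zero_of_isCirc_eq_zero (hT₁.isCirc_eq_zero_of_zero_flag hm)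
    · have hl : p ∉ shiftedDiag r lam := fun hl => hs (mem_skewDiag_shiftBar_iff.2 ⟨hl, hm⟩)
      rw [circVals, glueTab_of_not_mem hmu hl]
      rfl

end Glue

theorem bijOn_decompose {n r : ℕ} {lam f : ℕ → ℕ}
    (hstrict : ∀ i j, 1 ≤ i → i < j → j ≤ r → lam j < lam i)
    (hlast : 2 ≤ r → f (r - 1) < lam (r - 1) ∨ f r < lam r) :
    Set.BijOn (decompose r lam) {T | IsMST n r lam f T}
      {q | IsBarMu r lam q.1 ∧ IsMST n r q.1 (fun _ => 0) q.2.1 ∧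
        IsRST r (shiftBar lam) (shiftBar q.1) f q.2.2} := by
  refine Set.InvOn.bijOn (f' := fun q => glueTab r lam q.1 q.2.1 q.2.2) ⟨?_, ?_⟩ ?_ ?_
  · intro T hT
    exact IsMST.glueTab_decompose hT
  · rintro ⟨mu, T₁, t⟩ ⟨hmu, hT₁, ht⟩
    simp only [decompose, uncircShape_glueTab hmu hT₁, restrictTab_glueTab hT₁,
      circVals_glueTab hmu hT₁ ht]
  · intro T hT
    exact ⟨IsMST.isBarMu_uncircShape hT hstrict hlast, IsMST.restrict_uncircShape hT,
      IsMST.isRST_circVals hT⟩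
  · rintro ⟨mu, T₁, t⟩ ⟨hmu, hT₁, ht⟩
    exact IsMST.glue hmu hT₁ ht

theorem statement_3_general (R : Type*) [CommRing R] (n r : ℕ) (lam f : ℕ → ℕ)
    (x z : ℕ → R) (b : ℤ → R)
    (hstrict : ∀ i j, 1 ≤ i → i < j → j ≤ r → lam j < lam i)
    (hlast : 2 ≤ r → f (r - 1) < lam (r - 1) ∨ f r < lam r) :
    Qflag n r lam f x z b =
      ∑ᶠ mu ∈ {mu : ℕ → ℕ | IsBarMu r lam mu},
        QIvanov n r mu x b *
          sTilde r (fun i => lam i + i - 1) (fun i => mu i + i - 1) f z (bext b) := by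
  rw [Qflag, finsum_mem_eq_of_bijOn (decompose r lam) (bijOn_decompose hstrict hlast)
    (g := fun q => mstWeight r q.1 x (fun _ => 0) b q.2.1 *
      rstWeight r (shiftBar lam) (shiftBar q.1) z (bext b) q.2.2)
    fun T hT => IsMST.mstWeight_eq_mul hT x z b]
  exact finsum_mem_setOf_triple_mul (isBarMu_finite r lam)
    (fun mu => isMST_finite n r mu fun _ => 0) (fun mu => isRST_finite r _ _ f)
    (fun mu T₁ => mstWeight r mu x (fun _ => 0) b T₁)
    fun mu t => rstWeight r (shiftBar lam) (shiftBar mu) z (bext b) t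

/-- Decomposition of the flagged factorial Q-function into factorial Q-functions and
row-strict flagged skew factorial Schur polynomials:  if `r ≥ 2` implies
`λ_{r−1} > f_{r−1}` or `λ_r > f_r`, then
`Q_{λ,f}(x;z|b) = Σ_μ Q_μ(x|b) · (s̃_{λ̄/μ̄,f}(z|b))^⋆`, the sum over strict partitions
`μ ⊆ λ` (padded by zeros to `r` parts) with `μ̄` a partition, where `⋆` is the
substitution `b_{−i} ↦ −b_{i+1}` (`i ≥ 0`).  It holds for every number `n` of
x-variables. -/
theorem statement_3 (R : Type*) [CommRing R] (n r : ℕ) (lam f : ℕ → ℕ)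
    (x z : ℕ → R) (b : ℤ → R)
    (hpos : ∀ i, 1 ≤ i → i ≤ r → 0 < lam i)
    (hstrict : ∀ i j, 1 ≤ i → i < j → j ≤ r → lam j < lam i)
    (hlast : 2 ≤ r → f (r - 1) < lam (r - 1) ∨ f r < lam r) :
    Qflag n r lam f x z b =
      ∑ᶠ mu ∈ {mu : ℕ → ℕ | IsBarMu r lam mu},
        QIvanov n r mu x b *
          sTilde r (fun i => lam i + i - 1) (fun i => mu i + i - 1) f z (bext b) :=
  statement_3_general R n r lam f x z b hstrict hlast
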